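/- Let 0<α<1, let γ∈(0,1), let β>1 be real, and let λ∈ℝ. For every t>0, the Caputo fractional derivative of order γ of the function t ↦ t^{β−1} E_{α,β}(λ t^α) satisfies D^γ_t ( t^{β−1} E_{α,β}(λ t^α) ) = t^{β−γ−1} E_{α,β−γ}(λ t^α). -/

import Mathlib

/-- The two-parameter Mittag-Leffler function `E_{a,m}(z) = ∑ zⁿ/Γ(a n + m)`. -/
noncomputable def mlf (a m z : ℝ) : ℝ := ∑' n : ℕ, z ^ n / Real.Gamma (a * n + m)

/-- The Caputo fractional derivative of order `r ∈ (0,1)`: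
`D^r h (t) = (1/Γ(1-r)) ∫₀ᵗ (t-s)^{-r} h'(s) ds`. -/
noncomputable def caputo (r : ℝ) (h : ℝ → ℝ) (t : ℝ) : ℝ :=
  (1 / Real.Gamma (1 - r)) * ∫ s in (0:ℝ)..t, (t - s) ^ (-r) * deriv h s

/-!
Expand `s^{β-1} E_{α,β}(λ s^α) = ∑ λⁿ s^{αn+β-1} / Γ(αn+β)`. Differentiating termwise lowers
both the exponent and the Gamma argument by one, and the Caputo integral of each term is a Beta
integral, `∫₀ᵗ (t-s)^{-γ} s^{p-1} ds = t^{p-γ} Γ(p) Γ(1-γ) / Γ(p+1-γ)`, so summing back gives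
`t^{β-γ-1} E_{α,β-γ}(λ t^α)`. Both interchanges (with the derivative and with the integral) are
justified by absolute convergence, which holds because `1 / Γ(αn+c)` decays faster than any
geometric sequence: `Γ x ≥ ⌊x-1⌋!` and `Aᵏ/k! ≤ exp A`.
-/

open Real Filter MeasureTheory Set

lemma rpow_sub_two_div_Gamma_le_exp {A x : ℝ} (hA : 1 ≤ A) (hx : 2 ≤ x) :
    A ^ (x - 2) / Gamma x ≤ exp A := by
  set k := ⌊x - 1⌋₊
  have hk : (k : ℝ) ≤ x - 1 := Nat.floor_le (by linarith)
  have hk' : x - 1 < k + 1 := Nat.lt_floor_add_one _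
  have hk1 : (1 : ℝ) ≤ k := by exact_mod_cast Nat.le_floor (by push_cast; linarith)
  have hGamma : (k.factorial : ℝ) ≤ Gamma x := by
    rw [← Gamma_nat_eq_factorial]
    exact Gamma_strictMonoOn_Ici.monotoneOn (mem_Ici.2 (by linarith)) (mem_Ici.2 (by linarith))
      (by linarith)
  calc A ^ (x - 2) / Gamma x ≤ A ^ k / k.factorial := by
        rw [← rpow_natCast]
        gcongr
        linarith
    _ ≤ exp A := pow_div_factorial_le_exp A (by linarith) k

lemma summable_pow_div_Gamma {α : ℝ} (hα : 0 < α) (c z : ℝ) :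
    Summable fun n : ℕ => z ^ n / Gamma (α * n + c) := by
  -- `A ^ (α * n) = (|z| + 1) ^ n`, so the bound on `A ^ (x - 2) / Γ x` yields geometric decay
  -- with ratio `|z| / (|z| + 1)`.
  set A := (|z| + 1) ^ α⁻¹
  have hA : 1 ≤ A := one_le_rpow (by linarith [abs_nonneg z]) (by positivity)
  have hAα : ∀ n : ℕ, A ^ (α * n) = (|z| + 1) ^ n := fun n => by
    rw [← rpow_mul (by positivity), inv_mul_cancel_left₀ hα.ne', rpow_natCast]
  have hr : |z| / (|z| + 1) < 1 := (div_lt_one (by positivity)).2 (by linarith)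
  refine summable_of_isBigO_nat (summable_geometric_of_lt_one (by positivity) hr) ?_
  refine Asymptotics.IsBigO.of_bound (A ^ (2 - c) * exp A) ?_
  have hlarge : ∀ᶠ n : ℕ in atTop, 2 ≤ α * n + c :=
    (tendsto_atTop_add_const_right _ c
      (tendsto_natCast_atTop_atTop.const_mul_atTop hα)).eventually_ge_atTop 2
  filter_upwards [hlarge] with n hn
  have hGamma := Gamma_pos_of_pos (by linarith : 0 < α * n + c)
  have hsplit : A ^ (α * n + c - 2) = A ^ (α * n) / A ^ (2 - c) := by
    rw [← rpow_sub (by linarith)]; ring_nf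
  have hbound : (|z| + 1) ^ n / Gamma (α * n + c) ≤ A ^ (2 - c) * exp A := by
    have := rpow_sub_two_div_Gamma_le_exp hA hn
    rw [hsplit, hAα, div_div, div_le_iff₀ (by positivity)] at this
    rw [div_le_iff₀ hGamma]
    linarith
  have hz : 0 < |z| + 1 := by positivity
  simp only [norm_div, norm_pow, Real.norm_eq_abs, abs_abs, abs_of_pos hGamma, abs_of_pos hz,
    div_pow]
  calc |z| ^ n / Gamma (α * n + c)
      = (|z| + 1) ^ n / Gamma (α * n + c) * (|z| ^ n / (|z| + 1) ^ n) := by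
        field_simp
    _ ≤ A ^ (2 - c) * exp A * (|z| ^ n / (|z| + 1) ^ n) := by gcongr

-- Also true at `p = 0`, where both sides vanish because Mathlib sets `Γ 0 = 0`.
lemma div_Gamma_add_one (p : ℝ) : p / Gamma (p + 1) = (Gamma p)⁻¹ := by
  rcases eq_or_ne p 0 with rfl | hp
  · simp [Gamma_zero]
  · rw [Gamma_add_one hp, div_mul_eq_div_div, div_self hp, one_div]

lemma rpow_le_rpow_add_rpow {a b x : ℝ} (ha : 0 < a) (hax : a ≤ x) (hxb : x ≤ b) (p : ℝ) :
    x ^ p ≤ a ^ p + b ^ p := by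
  rcases le_or_gt 0 p with hp | hp
  · linarith [rpow_le_rpow (by linarith) hxb hp, rpow_nonneg ha.le p]
  · linarith [rpow_le_rpow_of_nonpos ha hax hp.le, rpow_nonneg (ha.le.trans (hax.trans hxb)) p]

noncomputable def mlfPowerTerm (α m lam : ℝ) (n : ℕ) (s : ℝ) : ℝ :=
  lam ^ n / Gamma (α * n + m) * s ^ (α * n + m - 1)

section mlfPowerTerm

variable {α m lam s : ℝ}

lemma mlfPowerTerm_eq (n : ℕ) (hs : 0 < s) :
    mlfPowerTerm α m lam n s = s ^ (m - 1) * ((lam * s ^ α) ^ n / Gamma (α * n + m)) := by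
  rw [mlfPowerTerm, mul_pow, ← rpow_natCast (s ^ α), ← rpow_mul hs.le,
    show α * n + m - 1 = α * n + (m - 1) by ring, rpow_add hs]
  ring

lemma rpow_mul_mlf_eq_tsum (hs : 0 < s) :
    s ^ (m - 1) * mlf α m (lam * s ^ α) = ∑' n, mlfPowerTerm α m lam n s := by
  rw [mlf, ← tsum_mul_left]
  exact tsum_congr fun n => (mlfPowerTerm_eq n hs).symm

lemma summable_mlfPowerTerm (hα : 0 < α) (hs : 0 < s) :
    Summable fun n => mlfPowerTerm α m lam n s := by
  simpa only [mlfPowerTerm_eq _ hs] using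
    (summable_pow_div_Gamma hα m (lam * s ^ α)).mul_left (s ^ (m - 1))

lemma norm_mlfPowerTerm (n : ℕ) (hm : 0 < α * n + m) (hs : 0 ≤ s) :
    ‖mlfPowerTerm α m lam n s‖ = mlfPowerTerm α m |lam| n s := by
  rw [mlfPowerTerm, mlfPowerTerm, norm_mul, norm_div, norm_pow, Real.norm_eq_abs,
    Real.norm_eq_abs, Real.norm_eq_abs, abs_of_pos (Gamma_pos_of_pos hm),
    abs_of_nonneg (rpow_nonneg hs _)]

lemma norm_mlfPowerTerm_le {a b : ℝ} (n : ℕ) (ha : 0 < a) (has : a ≤ s) (hsb : s ≤ b) :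
    ‖mlfPowerTerm α m lam n s‖ ≤ ‖mlfPowerTerm α m lam n a‖ + ‖mlfPowerTerm α m lam n b‖ := by
  simp only [mlfPowerTerm, norm_mul, ← mul_add]
  gcongr
  simp only [Real.norm_eq_abs, abs_of_nonneg (rpow_nonneg ha.le _),
    abs_of_nonneg (rpow_nonneg (ha.le.trans has) _),
    abs_of_nonneg (rpow_nonneg (ha.le.trans (has.trans hsb)) _)]
  exact rpow_le_rpow_add_rpow ha has hsb _

lemma hasDerivAt_mlfPowerTerm (n : ℕ) (hs : s ≠ 0) :
    HasDerivAt (mlfPowerTerm α m lam n) (mlfPowerTerm α (m - 1) lam n s) s := by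
  have h : HasDerivAt (mlfPowerTerm α m lam n)
      (lam ^ n / Gamma (α * n + m) * ((α * n + m - 1) * s ^ (α * n + m - 1 - 1))) s :=
    (hasDerivAt_rpow_const (Or.inl hs)).const_mul _
  have hΓ := div_Gamma_add_one (α * n + (m - 1))
  rw [show α * n + (m - 1) + 1 = α * n + m by ring] at hΓ
  refine h.congr_deriv ?_
  rw [mlfPowerTerm, div_eq_mul_inv (lam ^ n) (Gamma (α * n + (m - 1))), ← hΓ]
  ring_nf

lemma hasDerivAt_rpow_mul_mlf (hα : 0 < α) (hs : 0 < s) :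
    HasDerivAt (fun z => z ^ (m - 1) * mlf α m (lam * z ^ α))
      (s ^ (m - 2) * mlf α (m - 1) (lam * s ^ α)) s := by
  have hs_mem : s ∈ Ioo (s / 2) (s + 1) := ⟨by linarith, by linarith⟩
  have hbound : Summable fun n =>
      ‖mlfPowerTerm α (m - 1) lam n (s / 2)‖ + ‖mlfPowerTerm α (m - 1) lam n (s + 1)‖ :=
    (summable_norm_iff.2 (summable_mlfPowerTerm hα (by linarith))).add
      (summable_norm_iff.2 (summable_mlfPowerTerm hα (by linarith)))
  have htsum := hasDerivAt_tsum_of_isPreconnected hbound isOpen_Ioo isPreconnected_Ioo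
    (fun n z hz => hasDerivAt_mlfPowerTerm n (by linarith [hz.1] : 0 < z).ne')
    (fun n z hz => norm_mlfPowerTerm_le n (by linarith) hz.1.le hz.2.le)
    hs_mem (summable_mlfPowerTerm hα hs) hs_mem
  rw [show m - 2 = m - 1 - 1 by ring, rpow_mul_mlf_eq_tsum hs]
  refine htsum.congr_of_eventuallyEq ?_
  filter_upwards [Ioi_mem_nhds hs] with z hz
  exact rpow_mul_mlf_eq_tsum hz

end mlfPowerTerm

lemma integral_rpow_mul_rpow_sub {u v t : ℝ} (hu : 0 < u) (hv : 0 < v) (ht : 0 < t) :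
    ∫ x in 0..t, x ^ (u - 1) * (t - x) ^ (v - 1)
      = t ^ (u + v - 1) * (Gamma u * Gamma v / Gamma (u + v)) := by
  have h := Complex.betaIntegral_scaled u v ht
  rw [Complex.betaIntegral_eq_Gamma_mul_div _ _ (by simpa) (by simpa)] at h
  apply Complex.ofReal_injective
  rw [← intervalIntegral.integral_ofReal]
  convert h using 1
  · refine intervalIntegral.integral_congr fun x hx => ?_
    rw [uIcc_of_le ht.le] at hx
    simp only [Complex.ofReal_mul, Complex.ofReal_cpow hx.1,
      Complex.ofReal_cpow (sub_nonneg.2 hx.2)]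
    push_cast
    ring_nf
  · rw [Complex.ofReal_mul, Complex.ofReal_cpow ht.le]
    push_cast [← Complex.Gamma_ofReal]
    ring_nf

lemma intervalIntegrable_rpow_mul_rpow_sub {u v t : ℝ} (hu : 0 < u) (hv : 0 < v) (ht : 0 < t) :
    IntervalIntegrable (fun x => x ^ (u - 1) * (t - x) ^ (v - 1)) volume 0 t := by
  -- Otherwise the integral would be the junk value `0`, not the positive Beta value.
  by_contra h
  have hval := integral_rpow_mul_rpow_sub hu hv ht
  rw [intervalIntegral.integral_undef h] at hval
  have : 0 < t ^ (u + v - 1) * (Gamma u * Gamma v / Gamma (u + v)) := by positivity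
  exact this.ne' hval.symm

section RiemannLiouville

variable {α m lam γ t : ℝ}

lemma rpow_sub_mul_mlfPowerTerm (n : ℕ) (s : ℝ) :
    (t - s) ^ (-γ) * mlfPowerTerm α m lam n s
      = lam ^ n / Gamma (α * n + m) * (s ^ (α * n + m - 1) * (t - s) ^ (1 - γ - 1)) := by
  rw [sub_sub_cancel_left, mlfPowerTerm]
  ring

lemma intervalIntegrable_rpow_sub_mul_mlfPowerTerm (n : ℕ) (hm : 0 < α * n + m) (hγ : γ < 1)
    (ht : 0 < t) :
    IntervalIntegrable (fun s => (t - s) ^ (-γ) * mlfPowerTerm α m lam n s) volume 0 t := by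
  simpa only [rpow_sub_mul_mlfPowerTerm] using
    (intervalIntegrable_rpow_mul_rpow_sub hm (sub_pos.2 hγ) ht).const_mul _

lemma integral_rpow_sub_mul_mlfPowerTerm (n : ℕ) (hm : 0 < α * n + m) (hγ : γ < 1)
    (ht : 0 < t) :
    ∫ s in 0..t, (t - s) ^ (-γ) * mlfPowerTerm α m lam n s
      = Gamma (1 - γ) * mlfPowerTerm α (m + 1 - γ) lam n t := by
  simp_rw [rpow_sub_mul_mlfPowerTerm]
  rw [intervalIntegral.integral_const_mul, integral_rpow_mul_rpow_sub hm (sub_pos.2 hγ) ht,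
    mlfPowerTerm, show α * n + m + (1 - γ) = α * n + (m + 1 - γ) by ring]
  have := Gamma_pos_of_pos hm
  field_simp

lemma integral_rpow_sub_mul_tsum_mlfPowerTerm (hα : 0 < α) (hm : 0 < m) (hγ : γ < 1)
    (ht : 0 < t) :
    1 / Gamma (1 - γ) * ∫ s in 0..t, (t - s) ^ (-γ) * ∑' n, mlfPowerTerm α m lam n s
      = ∑' n, mlfPowerTerm α (m + 1 - γ) lam n t := by
  have hm_n (n : ℕ) : 0 < α * n + m := by positivity
  have hnorm (n : ℕ) : ∫ s in Ioc 0 t, ‖(t - s) ^ (-γ) * mlfPowerTerm α m lam n s‖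
      = Gamma (1 - γ) * mlfPowerTerm α (m + 1 - γ) |lam| n t := by
    rw [← integral_rpow_sub_mul_mlfPowerTerm n (hm_n n) hγ ht,
      intervalIntegral.integral_of_le ht.le]
    refine setIntegral_congr_fun measurableSet_Ioc fun s hs => ?_
    rw [norm_mul, norm_mlfPowerTerm n (hm_n n) hs.1.le, Real.norm_eq_abs,
      abs_of_nonneg (rpow_nonneg (sub_nonneg.2 hs.2) _)]
  have hsum := integral_tsum_of_summable_integral_norm
    (fun n => (intervalIntegrable_rpow_sub_mul_mlfPowerTerm (lam := lam) n (hm_n n) hγ ht).1)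
    (by simpa only [hnorm] using (summable_mlfPowerTerm hα ht).mul_left (Gamma (1 - γ)))
  simp_rw [← tsum_mul_left]
  rw [intervalIntegral.integral_of_le ht.le, ← hsum, ← tsum_mul_left]
  refine tsum_congr fun n => ?_
  rw [← intervalIntegral.integral_of_le ht.le, integral_rpow_sub_mul_mlfPowerTerm n (hm_n n) hγ ht,
    ← mul_assoc, one_div_mul_cancel (Gamma_pos_of_pos (sub_pos.2 hγ)).ne', one_mul]

end RiemannLiouville

theorem caputo_mlf_power_general (α β γ lam : ℝ) (hα : 0 < α)
    (hγ1 : γ < 1) (hβ : 1 < β) (t : ℝ) (ht : 0 < t) :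
    caputo γ (fun s => s ^ (β - 1) * mlf α β (lam * s ^ α)) t
      = t ^ (β - γ - 1) * mlf α (β - γ) (lam * t ^ α) := by
  have hderiv : ∀ s ∈ Ioc 0 t, deriv (fun s => s ^ (β - 1) * mlf α β (lam * s ^ α)) s
      = ∑' n, mlfPowerTerm α (β - 1) lam n s := fun s hs => by
    rw [(hasDerivAt_rpow_mul_mlf hα hs.1).deriv, show β - 2 = β - 1 - 1 by ring,
      rpow_mul_mlf_eq_tsum hs.1]
  rw [caputo, intervalIntegral.integral_congr_ae
      (ae_of_all _ fun s hs => by rw [hderiv s (uIoc_of_le ht.le ▸ hs)]),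
    integral_rpow_sub_mul_tsum_mlfPowerTerm hα (by linarith) hγ1 ht,
    show β - 1 + 1 - γ = β - γ by ring, rpow_mul_mlf_eq_tsum ht]

/-- `D^γ_t (t^{β-1} E_{α,β}(λ tᵅ)) = t^{β-γ-1} E_{α,β-γ}(λ tᵅ)` for `t > 0`,
`0 < α < 1`, `γ ∈ (0,1)`, `β > 1`, `λ ∈ ℝ`. -/
theorem caputo_mlf_power (α β γ lam : ℝ) (hα : 0 < α) (hα1 : α < 1)
    (hγ : 0 < γ) (hγ1 : γ < 1) (hβ : 1 < β) (t : ℝ) (ht : 0 < t) :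
    caputo γ (fun s => s ^ (β - 1) * mlf α β (lam * s ^ α)) t
      = t ^ (β - γ - 1) * mlf α (β - γ) (lam * t ^ α) :=
  caputo_mlf_power_general α β γ lam hα hγ1 hβ t ht
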